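/- arXiv:2206.13998 — 2 statements merged into one kernel-verified Lean document; each statement's English description precedes it below -/
import Mathlib

section
/- Let G be a subgroup of the symmetric group on Fin p and H a subgroup of the symmetric group on Fin q, with permutation matrices P_g, P_h. Let ℬ(G) be a basis of the real vector space E(G) = {M ∈ ℝ^{p×p} : M P_g = P_g M for all g ∈ G} and ℬ(H) a basis of E(H) = {M ∈ ℝ^{q×q} : M P_h = P_h M for all h ∈ H}. Then the set {A ⊕ 0_q : A ∈ ℬ(G)} ∪ {0_p ⊕ B : B ∈ ℬ(H)} ∪ {1_{O×(p+O′)}, 1_{(p+O′)×O} : O an orbit of G on Fin p, O′ an orbit of H on Fin q} is a basis of the space E(G⊕H) = {M ∈ ℝ^{(p+q)×(p+q)} : M (P_g ⊕ P_h) = (P_g ⊕ P_h) M for all g ∈ G, h ∈ H}, where p+O′ = {p + i : i ∈ O′}. -/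
open Matrix
open scoped Kronecker
open scoped Classical

noncomputable section

def permMat {m : ℕ} (g : Equiv.Perm (Fin m)) : Matrix (Fin m) (Fin m) ℝ :=
  Matrix.of fun i j => if i = g j then (1 : ℝ) else 0

def frobInner {α β : Type*} [Fintype α] [Fintype β] (A B : Matrix α β ℝ) : ℝ :=
  Matrix.trace (Aᵀ * B)

def indMat {α β : Type*} (R : Set α) (S : Set β) : Matrix α β ℝ :=
  Matrix.of fun i j => if i ∈ R ∧ j ∈ S then (1 : ℝ) else 0

def diagInd {α : Type*} (O : Set α) : Matrix α α ℝ :=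
  Matrix.of fun i j => if i = j ∧ i ∈ O then (1 : ℝ) else 0

def orbitOf {m : ℕ} (G : Subgroup (Equiv.Perm (Fin m))) (i : Fin m) : Set (Fin m) :=
  {j | ∃ g ∈ G, g i = j}

def commutant {α : Type*} [Fintype α] [DecidableEq α] (S : Set (Matrix α α ℝ)) :
    Submodule ℝ (Matrix α α ℝ) where
  carrier := {M | ∀ Q ∈ S, M * Q = Q * M}
  add_mem' := by
    intro a b ha hb Q hQ
    rw [Matrix.add_mul, Matrix.mul_add, ha Q hQ, hb Q hQ]
  zero_mem' := by intro Q hQ; simp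
  smul_mem' := by
    intro c M hM Q hQ
    rw [Matrix.smul_mul, Matrix.mul_smul, hM Q hQ]

def fixedSpace {α : Type*} [Fintype α] (S : Set (Matrix α α ℝ)) : Submodule ℝ (α → ℝ) where
  carrier := {v | ∀ Q ∈ S, Q.mulVec v = v}
  add_mem' := by
    intro a b ha hb Q hQ
    rw [Matrix.mulVec_add, ha Q hQ, hb Q hQ]
  zero_mem' := by intro Q hQ; simp
  smul_mem' := by
    intro c v hv Q hQ
    rw [Matrix.mulVec_smul, hv Q hQ]

def oplus {p q : ℕ} (A : Matrix (Fin p) (Fin p) ℝ) (B : Matrix (Fin q) (Fin q) ℝ) :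
    Matrix (Fin (p + q)) (Fin (p + q)) ℝ :=
  Matrix.reindex finSumFinEquiv finSumFinEquiv (Matrix.fromBlocks A 0 0 B)

def wr {p q : ℕ} (h : Fin p → Equiv.Perm (Fin q)) (g : Equiv.Perm (Fin p)) :
    Matrix (Fin p × Fin q) (Fin p × Fin q) ℝ :=
  Matrix.of fun x y => if x.1 = g y.1 ∧ x.2 = h x.1 y.2 then (1 : ℝ) else 0

def IsBasisOfSet {N : Type*} [AddCommGroup N] [Module ℝ N] (s : Set N)
    (W : Submodule ℝ N) : Prop :=
  LinearIndependent ℝ (fun x : s => (x : N)) ∧ Submodule.span ℝ s = W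

def vecCol {m : ℕ} (X : Matrix (Fin m) (Fin m) ℝ) : Fin m × Fin m → ℝ :=
  fun x => X x.2 x.1

def rearrange {p q : ℕ} (M : Matrix (Fin p × Fin q) (Fin p × Fin q) ℝ) :
    Matrix (Fin p × Fin p) (Fin q × Fin q) ℝ :=
  Matrix.of fun x y => M (x.2, y.2) (x.1, y.1)

def frob {α β : Type*} [Fintype α] [Fintype β] (A : Matrix α β ℝ) : ℝ :=
  Real.sqrt (∑ i, ∑ j, (A i j) ^ 2)

def l2norm {k : ℕ} (v : Fin k → ℝ) : ℝ := Real.sqrt (∑ r, v r ^ 2)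


section Helpers

open Matrix

-- permutation matrix multiplication lemmas
lemma ds_permMat_mul {m : ℕ} {α : Type*} [Fintype α] (g : Equiv.Perm (Fin m))
    (C : Matrix (Fin m) α ℝ) :
    permMat g * C = Matrix.of fun a b => C (g⁻¹ a) b := by
  ext a b
  simp only [Matrix.mul_apply, permMat, Matrix.of_apply]
  rw [Finset.sum_eq_single (g⁻¹ a)]
  · simp
  · intro k _ hk
    rw [if_neg, zero_mul]
    intro h
    exact hk (by rw [h]; simp)
  · simp

lemma ds_mul_permMat {m : ℕ} {α : Type*} [Fintype α] (h : Equiv.Perm (Fin m))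
    (C : Matrix α (Fin m) ℝ) :
    C * permMat h = Matrix.of fun a b => C a (h b) := by
  ext a b
  simp only [Matrix.mul_apply, permMat, Matrix.of_apply]
  simp [mul_ite, mul_one, mul_zero]

-- orbit lemmas
lemma ds_mem_orbit_self {m : ℕ} (G : Subgroup (Equiv.Perm (Fin m))) (i : Fin m) :
    i ∈ orbitOf G i := ⟨1, G.one_mem, rfl⟩

lemma ds_orbit_eq_of_mem {m : ℕ} {G : Subgroup (Equiv.Perm (Fin m))} {i k : Fin m}
    (hk : k ∈ orbitOf G i) : orbitOf G k = orbitOf G i := by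
  obtain ⟨g, hg, rfl⟩ := hk
  ext x
  constructor
  · rintro ⟨u, hu, rfl⟩
    exact ⟨u * g, G.mul_mem hu hg, rfl⟩
  · rintro ⟨u, hu, rfl⟩
    exact ⟨u * g⁻¹, G.mul_mem hu (G.inv_mem hg), by simp [Equiv.Perm.mul_apply]⟩

lemma ds_mem_orbit_symm {m : ℕ} {G : Subgroup (Equiv.Perm (Fin m))} {i k : Fin m} :
    i ∈ orbitOf G k ↔ k ∈ orbitOf G i := by
  constructor
  · rintro ⟨g, hg, rfl⟩
    exact ⟨g⁻¹, G.inv_mem hg, by simp⟩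
  · rintro ⟨g, hg, rfl⟩
    exact ⟨g⁻¹, G.inv_mem hg, by simp⟩

lemma ds_smul_mem_orbit {m : ℕ} {G : Subgroup (Equiv.Perm (Fin m))} {g : Equiv.Perm (Fin m)}
    (hg : g ∈ G) {i x : Fin m} (hx : x ∈ orbitOf G i) : g x ∈ orbitOf G i := by
  obtain ⟨u, hu, rfl⟩ := hx
  exact ⟨g * u, G.mul_mem hg hu, rfl⟩

lemma ds_smul_mem_orbit_iff {m : ℕ} {G : Subgroup (Equiv.Perm (Fin m))} {g : Equiv.Perm (Fin m)}
    (hg : g ∈ G) {i x : Fin m} : g x ∈ orbitOf G i ↔ x ∈ orbitOf G i := by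
  constructor
  · intro h
    have := ds_smul_mem_orbit (G.inv_mem hg) h
    simpa using this
  · exact ds_smul_mem_orbit hg

end Helpers
section Blocks

open Matrix

variable {p q : ℕ}

def dsREq (p q : ℕ) :
    Matrix (Fin p ⊕ Fin q) (Fin p ⊕ Fin q) ℝ ≃ₗ[ℝ] Matrix (Fin (p + q)) (Fin (p + q)) ℝ :=
  Matrix.reindexLinearEquiv ℝ ℝ finSumFinEquiv finSumFinEquiv

lemma ds_natAdd_injective (p m : ℕ) : Function.Injective (@Fin.natAdd p m) := fun a b h => by
  have := congrArg Fin.val h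
  simp only [Fin.coe_natAdd] at this
  exact Fin.ext (by omega)

lemma dsREq_apply (X : Matrix (Fin p ⊕ Fin q) (Fin p ⊕ Fin q) ℝ) (a b : Fin (p + q)) :
    dsREq p q X a b = X (finSumFinEquiv.symm a) (finSumFinEquiv.symm b) := rfl

lemma ds_oplus_eq (A : Matrix (Fin p) (Fin p) ℝ) (B : Matrix (Fin q) (Fin q) ℝ) :
    oplus A B = dsREq p q (Matrix.fromBlocks A 0 0 B) := rfl

lemma dsREq_mul (X Y : Matrix (Fin p ⊕ Fin q) (Fin p ⊕ Fin q) ℝ) :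
    dsREq p q X * dsREq p q Y = dsREq p q (X * Y) := by
  simp [dsREq, Matrix.reindexLinearEquiv_apply, Matrix.reindex_apply,
    Matrix.submatrix_mul_equiv]

def dsUL (p q : ℕ) : Matrix (Fin p) (Fin p) ℝ →ₗ[ℝ] Matrix (Fin (p + q)) (Fin (p + q)) ℝ :=
  (dsREq p q).toLinearMap ∘ₗ
    { toFun := fun A => Matrix.fromBlocks A 0 0 0
      map_add' := fun A A' => by ext (i|i) (j|j) <;> simp
      map_smul' := fun c A => by ext (i|i) (j|j) <;> simp }

def dsLR (p q : ℕ) : Matrix (Fin q) (Fin q) ℝ →ₗ[ℝ] Matrix (Fin (p + q)) (Fin (p + q)) ℝ :=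
  (dsREq p q).toLinearMap ∘ₗ
    { toFun := fun B => Matrix.fromBlocks 0 0 0 B
      map_add' := fun B B' => by ext (i|i) (j|j) <;> simp
      map_smul' := fun c B => by ext (i|i) (j|j) <;> simp }

def dsUR (p q : ℕ) : Matrix (Fin p) (Fin q) ℝ →ₗ[ℝ] Matrix (Fin (p + q)) (Fin (p + q)) ℝ :=
  (dsREq p q).toLinearMap ∘ₗ
    { toFun := fun C => Matrix.fromBlocks 0 C 0 0
      map_add' := fun C C' => by ext (i|i) (j|j) <;> simp
      map_smul' := fun c C => by ext (i|i) (j|j) <;> simp }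

def dsLL (p q : ℕ) : Matrix (Fin q) (Fin p) ℝ →ₗ[ℝ] Matrix (Fin (p + q)) (Fin (p + q)) ℝ :=
  (dsREq p q).toLinearMap ∘ₗ
    { toFun := fun D => Matrix.fromBlocks 0 0 D 0
      map_add' := fun D D' => by ext (i|i) (j|j) <;> simp
      map_smul' := fun c D => by ext (i|i) (j|j) <;> simp }

lemma dsUL_apply (A : Matrix (Fin p) (Fin p) ℝ) : dsUL p q A = oplus A 0 := rfl

lemma dsLR_apply (B : Matrix (Fin q) (Fin q) ℝ) : dsLR p q B = oplus 0 B := rfl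

lemma dsUL_injective : Function.Injective (dsUL p q) := by
  intro A A' h
  have h2 := (dsREq p q).injective ((dsREq p q).injective.eq_iff.mpr rfl ▸ h : _)
  have h3 : Matrix.fromBlocks A (0 : Matrix (Fin p) (Fin q) ℝ)
      (0 : Matrix (Fin q) (Fin p) ℝ) (0 : Matrix (Fin q) (Fin q) ℝ) =
      Matrix.fromBlocks A' 0 0 0 := (dsREq p q).injective h
  exact ((Matrix.fromBlocks_inj.mp h3).1)

lemma dsLR_injective : Function.Injective (dsLR p q) := by
  intro B B' h
  have h3 : Matrix.fromBlocks (0 : Matrix (Fin p) (Fin p) ℝ) (0 : Matrix (Fin p) (Fin q) ℝ)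
      (0 : Matrix (Fin q) (Fin p) ℝ) B =
      Matrix.fromBlocks 0 0 0 B' := (dsREq p q).injective h
  exact ((Matrix.fromBlocks_inj.mp h3).2.2.2)

-- the image of the indicator matrices under the embeddings
lemma ds_indMat_UR (O : Set (Fin p)) (O' : Set (Fin q)) :
    indMat (Fin.castAdd q '' O) (Fin.natAdd p '' O') = dsUR p q (indMat O O') := by
  ext a b
  show _ = dsREq p q (Matrix.fromBlocks 0 (indMat O O') 0 0) a b
  rw [dsREq_apply]
  have ha' : a = finSumFinEquiv (finSumFinEquiv.symm a) := (Equiv.apply_symm_apply _ _).symm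
  have hb' : b = finSumFinEquiv (finSumFinEquiv.symm b) := (Equiv.apply_symm_apply _ _).symm
  rcases hx : finSumFinEquiv.symm a with x | x <;> rcases hy : finSumFinEquiv.symm b with y | y <;>
    rw [hx] at ha' <;> rw [hy] at hb' <;>
    simp only [finSumFinEquiv_apply_left, finSumFinEquiv_apply_right] at ha' hb' <;>
    subst ha' <;> subst hb' <;>
    simp only [Matrix.fromBlocks_apply₁₁, Matrix.fromBlocks_apply₁₂, Matrix.fromBlocks_apply₂₁,
      Matrix.fromBlocks_apply₂₂, indMat, Matrix.of_apply, Matrix.zero_apply]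
  · -- inl inl : goal if castAdd x ∈ image ∧ castAdd y ∈ natAdd image then 1 else 0 = 0
    rw [if_neg]
    rintro ⟨-, ⟨z, -, hz⟩⟩
    have := congrArg Fin.val hz
    simp [Fin.coe_natAdd, Fin.coe_castAdd] at this
    omega
  · -- inl inr
    refine if_congr ?_ rfl rfl
    constructor
    · rintro ⟨⟨z, hz, hz2⟩, ⟨w, hw, hw2⟩⟩
      have h1 : z = x := Fin.castAdd_injective _ _ hz2
      have h2 : w = y := ds_natAdd_injective _ _ hw2
      exact ⟨h1 ▸ hz, h2 ▸ hw⟩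
    · rintro ⟨h1, h2⟩
      exact ⟨⟨x, h1, rfl⟩, ⟨y, h2, rfl⟩⟩
  · rw [if_neg]
    rintro ⟨⟨z, -, hz⟩, -⟩
    have := congrArg Fin.val hz
    simp [Fin.coe_natAdd, Fin.coe_castAdd] at this
    omega
  · rw [if_neg]
    rintro ⟨⟨z, -, hz⟩, -⟩
    have := congrArg Fin.val hz
    simp [Fin.coe_natAdd, Fin.coe_castAdd] at this
    omega

lemma ds_indMat_LL (O' : Set (Fin q)) (O : Set (Fin p)) :
    indMat (Fin.natAdd p '' O') (Fin.castAdd q '' O) = dsLL p q (indMat O' O) := by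
  ext a b
  show _ = dsREq p q (Matrix.fromBlocks 0 0 (indMat O' O) 0) a b
  rw [dsREq_apply]
  have ha' : a = finSumFinEquiv (finSumFinEquiv.symm a) := (Equiv.apply_symm_apply _ _).symm
  have hb' : b = finSumFinEquiv (finSumFinEquiv.symm b) := (Equiv.apply_symm_apply _ _).symm
  rcases hx : finSumFinEquiv.symm a with x | x <;> rcases hy : finSumFinEquiv.symm b with y | y <;>
    rw [hx] at ha' <;> rw [hy] at hb' <;>
    simp only [finSumFinEquiv_apply_left, finSumFinEquiv_apply_right] at ha' hb' <;>
    subst ha' <;> subst hb' <;>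
    simp only [Matrix.fromBlocks_apply₁₁, Matrix.fromBlocks_apply₁₂, Matrix.fromBlocks_apply₂₁,
      Matrix.fromBlocks_apply₂₂, indMat, Matrix.of_apply, Matrix.zero_apply]
  · rw [if_neg]
    rintro ⟨⟨z, -, hz⟩, -⟩
    have := congrArg Fin.val hz
    simp [Fin.coe_natAdd, Fin.coe_castAdd] at this
    omega
  · rw [if_neg]
    rintro ⟨⟨z, -, hz⟩, -⟩
    have := congrArg Fin.val hz
    simp [Fin.coe_natAdd, Fin.coe_castAdd] at this
    omega
  · refine if_congr ?_ rfl rfl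
    constructor
    · rintro ⟨⟨z, hz, hz2⟩, ⟨w, hw, hw2⟩⟩
      have h1 : z = x := ds_natAdd_injective _ _ hz2
      have h2 : w = y := Fin.castAdd_injective _ _ hw2
      exact ⟨h1 ▸ hz, h2 ▸ hw⟩
    · rintro ⟨h1, h2⟩
      exact ⟨⟨x, h1, rfl⟩, ⟨y, h2, rfl⟩⟩
  · rw [if_neg]
    rintro ⟨-, ⟨z, -, hz⟩⟩
    have := congrArg Fin.val hz
    simp [Fin.coe_natAdd, Fin.coe_castAdd] at this
    omega

end Blocks
section Supports

open Matrix

def dsSupp {α β : Type*} [Fintype α] [Fintype β] (P : α → β → Prop) :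
    Submodule ℝ (Matrix α β ℝ) where
  carrier := {M | ∀ a b, ¬ P a b → M a b = 0}
  add_mem' := by
    intro M N hM hN a b hab
    have : (M + N) a b = M a b + N a b := rfl
    rw [this, hM a b hab, hN a b hab, add_zero]
  zero_mem' := by intro a b _; rfl
  smul_mem' := by
    intro c M hM a b hab
    have : (c • M) a b = c * M a b := rfl
    rw [this, hM a b hab, mul_zero]

lemma dsSupp_mono {α β : Type*} [Fintype α] [Fintype β] {P Q : α → β → Prop}
    (h : ∀ a b, P a b → Q a b) : dsSupp P ≤ dsSupp Q := by
  intro M hM a b hab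
  exact hM a b (fun hp => hab (h a b hp))

lemma dsSupp_disjoint {α β : Type*} [Fintype α] [Fintype β] {P Q : α → β → Prop}
    (h : ∀ a b, ¬ (P a b ∧ Q a b)) : Disjoint (dsSupp P) (dsSupp Q) := by
  rw [Submodule.disjoint_def]
  intro M hM hM' 
  ext a b
  by_cases hp : P a b
  · exact hM' a b (fun hq => h a b ⟨hp, hq⟩)
  · exact hM a b hp

lemma ds_li_of_disjoint_support {α β : Type*} [Fintype α] [Fintype β]
    (S : Set (Matrix α β ℝ)) (h0 : ∀ M ∈ S, M ≠ 0)
    (hd : ∀ M ∈ S, ∀ N ∈ S, M ≠ N → ∀ a b, M a b = 0 ∨ N a b = 0) :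
    LinearIndependent ℝ (fun x : S => (x : Matrix α β ℝ)) := by
  rw [linearIndependent_iff]
  intro l hl
  ext x
  obtain ⟨M, hM⟩ := x
  show l ⟨M, hM⟩ = 0
  by_contra hne
  -- find a nonzero entry of M
  have hMne : M ≠ 0 := h0 M hM
  have : ∃ a b, M a b ≠ 0 := by
    by_contra hc
    push_neg at hc
    exact hMne (by ext a b; exact hc a b)
  obtain ⟨a, b, hab⟩ := this
  rw [Finsupp.linearCombination_apply, Finsupp.sum] at hl
  have h2 : ∑ x ∈ l.support, l x * (x : Matrix α β ℝ) a b = 0 := by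
    have := congrFun (congrFun (congrArg (fun (X : Matrix α β ℝ) => (X : α → β → ℝ)) hl) a) b
    simpa [Matrix.sum_apply] using this
  rw [Finset.sum_eq_single (⟨M, hM⟩ : S)] at h2
  · rcases mul_eq_zero.mp h2 with h | h
    · exact hne h
    · exact hab h
  · intro x hx hxne
    have hxM : (x : Matrix α β ℝ) ≠ M := fun h => hxne (Subtype.ext h)
    rcases hd x x.2 M hM hxM a b with h | h
    · rw [h, mul_zero]
    · exact absurd h hab
  · intro hns
    exact absurd (Finsupp.mem_support_iff.mpr hne) hns

end Supports

section OrbitDecomp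

open Matrix

variable {p q : ℕ}

/-- commutation of permutation matrices with orbit indicator matrices -/
lemma ds_permMat_indMat_comm {m n : ℕ} (G : Subgroup (Equiv.Perm (Fin m)))
    (H : Subgroup (Equiv.Perm (Fin n))) {g : Equiv.Perm (Fin m)} {h : Equiv.Perm (Fin n)}
    (hg : g ∈ G) (hh : h ∈ H) (i : Fin m) (j : Fin n) :
    permMat g * indMat (orbitOf G i) (orbitOf H j) =
      indMat (orbitOf G i) (orbitOf H j) * permMat h := by
  rw [ds_permMat_mul, ds_mul_permMat]
  ext a b
  simp only [Matrix.of_apply, indMat]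
  refine if_congr ?_ rfl rfl
  constructor
  · rintro ⟨h1, h2⟩
    refine ⟨?_, ds_smul_mem_orbit hh h2⟩
    have := ds_smul_mem_orbit hg h1
    simpa using this
  · rintro ⟨h1, h2⟩
    refine ⟨ds_smul_mem_orbit (G.inv_mem hg) h1, ?_⟩
    have := ds_smul_mem_orbit (H.inv_mem hh) h2
    simpa using this

/-- the orbit-average decomposition of a matrix which is invariant on orbit products -/
lemma ds_orbit_decomp {m n : ℕ} (G : Subgroup (Equiv.Perm (Fin m)))
    (H : Subgroup (Equiv.Perm (Fin n))) (C : Matrix (Fin m) (Fin n) ℝ)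
    (hrow : ∀ g ∈ G, ∀ a b, C (g a) b = C a b)
    (hcol : ∀ h ∈ H, ∀ a b, C a (h b) = C a b) :
    C = ∑ i : Fin m, ∑ j : Fin n,
      (C i j / ((Finset.univ.filter (· ∈ orbitOf G i)).card *
        (Finset.univ.filter (· ∈ orbitOf H j)).card)) • indMat (orbitOf G i) (orbitOf H j) := by
  ext a b
  simp only [Matrix.sum_apply, Matrix.smul_apply, smul_eq_mul]
  have key : ∀ (i : Fin m) (j : Fin n),
      (C i j / ((Finset.univ.filter (· ∈ orbitOf G i)).card *
        (Finset.univ.filter (· ∈ orbitOf H j)).card)) * indMat (orbitOf G i) (orbitOf H j) a b =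
      (if i ∈ orbitOf G a then (1:ℝ) else 0) * ((if j ∈ orbitOf H b then (1:ℝ) else 0) *
        (C a b / ((Finset.univ.filter (· ∈ orbitOf G a)).card *
          (Finset.univ.filter (· ∈ orbitOf H b)).card))) := by
    intro i j
    by_cases hi : i ∈ orbitOf G a
    · by_cases hj : j ∈ orbitOf H b
      · have hoG : orbitOf G i = orbitOf G a := ds_orbit_eq_of_mem hi
        have hoH : orbitOf H j = orbitOf H b := ds_orbit_eq_of_mem hj
        have hCij : C i j = C a b := by
          obtain ⟨g, hg, rfl⟩ := hi
          obtain ⟨h, hh, rfl⟩ := hj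
          rw [hrow g hg, hcol h hh]
        have hmem : a ∈ orbitOf G i ∧ b ∈ orbitOf H j := by
          rw [hoG, hoH]
          exact ⟨ds_mem_orbit_self G a, ds_mem_orbit_self H b⟩
        simp only [indMat, Matrix.of_apply, if_pos hmem, if_pos hi, if_pos hj,
          hoG, hoH, hCij]
        rw [if_pos ⟨ds_mem_orbit_self G a, ds_mem_orbit_self H b⟩]
        ring
      · have hmem : ¬ (a ∈ orbitOf G i ∧ b ∈ orbitOf H j) := by
          rintro ⟨-, h2⟩
          exact hj (ds_mem_orbit_symm.mp h2)
        simp [indMat, hmem, hj]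
    · have hmem : ¬ (a ∈ orbitOf G i ∧ b ∈ orbitOf H j) := by
        rintro ⟨h1, -⟩
        exact hi (ds_mem_orbit_symm.mp h1)
      simp [indMat, hmem, hi]
  rw [Finset.sum_congr rfl (fun i _ => Finset.sum_congr rfl (fun j _ => key i j))]
  simp only [← Finset.mul_sum, ← Finset.sum_mul]
  rw [Finset.sum_boole, Finset.sum_boole]
  have hGa : (0:ℝ) < (Finset.univ.filter (· ∈ orbitOf G a)).card := by
    have : a ∈ Finset.univ.filter (· ∈ orbitOf G a) := by
      simp [ds_mem_orbit_self]
    exact_mod_cast Finset.card_pos.mpr ⟨a, this⟩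
  have hHb : (0:ℝ) < (Finset.univ.filter (· ∈ orbitOf H b)).card := by
    have : b ∈ Finset.univ.filter (· ∈ orbitOf H b) := by
      simp [ds_mem_orbit_self]
    exact_mod_cast Finset.card_pos.mpr ⟨b, this⟩
  field_simp

end OrbitDecomp
section Main

open Matrix

lemma ds_permMat_one {m : ℕ} : permMat (1 : Equiv.Perm (Fin m)) = 1 := by
  ext a b
  simp [permMat, Matrix.one_apply]
  exact if_congr Iff.rfl rfl rfl

lemma ds_comm_blocks {p q : ℕ} (A : Matrix (Fin p) (Fin p) ℝ) (C : Matrix (Fin p) (Fin q) ℝ)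
    (D : Matrix (Fin q) (Fin p) ℝ) (B : Matrix (Fin q) (Fin q) ℝ)
    (g : Equiv.Perm (Fin p)) (h : Equiv.Perm (Fin q))
    (h1 : A * permMat g = permMat g * A) (h2 : B * permMat h = permMat h * B)
    (h3 : C * permMat h = permMat g * C) (h4 : D * permMat g = permMat h * D) :
    dsREq p q (Matrix.fromBlocks A C D B) * oplus (permMat g) (permMat h) =
      oplus (permMat g) (permMat h) * dsREq p q (Matrix.fromBlocks A C D B) := by
  rw [ds_oplus_eq, dsREq_mul, dsREq_mul]
  congr 1
  rw [Matrix.fromBlocks_multiply, Matrix.fromBlocks_multiply]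
  simp [h1, h2, h3, h4]

lemma ds_val_lt_of_symm_inl {p q : ℕ} {a : Fin (p + q)} {x : Fin p}
    (h : finSumFinEquiv.symm a = Sum.inl x) : (a : ℕ) < p := by
  have : a = Fin.castAdd q x := by
    rw [← Equiv.apply_symm_apply finSumFinEquiv a, h, finSumFinEquiv_apply_left]
  rw [this]
  simpa using x.isLt

lemma ds_val_ge_of_symm_inr {p q : ℕ} {a : Fin (p + q)} {x : Fin q}
    (h : finSumFinEquiv.symm a = Sum.inr x) : p ≤ (a : ℕ) := by
  have : a = Fin.natAdd p x := by
    rw [← Equiv.apply_symm_apply finSumFinEquiv a, h, finSumFinEquiv_apply_right]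
  rw [this]
  simp

end Main

/-- Given bases `bG` of `E(G)` and `bH` of `E(H)`, the set consisting of
`A ⊕ 0_q` for `A ∈ bG`, `0_p ⊕ B` for `B ∈ bH`, and the indicator matrices
`1_{O×(p+O')}` and `1_{(p+O')×O}` for orbits `O` of `G` and `O'` of `H`,
is a basis of `E(G ⊕ H)`. -/
theorem directSum_equivariant_basis {p q : ℕ}
    (G : Subgroup (Equiv.Perm (Fin p))) (H : Subgroup (Equiv.Perm (Fin q)))
    (bG : Set (Matrix (Fin p) (Fin p) ℝ)) (bH : Set (Matrix (Fin q) (Fin q) ℝ))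
    (hbG : IsBasisOfSet bG (commutant {Q | ∃ g ∈ G, Q = permMat g}))
    (hbH : IsBasisOfSet bH (commutant {Q | ∃ h ∈ H, Q = permMat h})) :
    IsBasisOfSet
      ({M | ∃ A ∈ bG, M = oplus A 0} ∪
       {M | ∃ B ∈ bH, M = oplus 0 B} ∪
       {M | ∃ i j, M = indMat (Fin.castAdd q '' orbitOf G i) (Fin.natAdd p '' orbitOf H j)} ∪
       {M | ∃ i j, M = indMat (Fin.natAdd p '' orbitOf H j) (Fin.castAdd q '' orbitOf G i)})
      (commutant {Q | ∃ g ∈ G, ∃ h ∈ H, Q = oplus (permMat g) (permMat h)}) := by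
  obtain ⟨liG, spanG⟩ := hbG
  obtain ⟨liH, spanH⟩ := hbH
  set s1 : Set (Matrix (Fin (p + q)) (Fin (p + q)) ℝ) := {M | ∃ A ∈ bG, M = oplus A 0} with hs1def
  set s2 : Set (Matrix (Fin (p + q)) (Fin (p + q)) ℝ) := {M | ∃ B ∈ bH, M = oplus 0 B} with hs2def
  set s3 : Set (Matrix (Fin (p + q)) (Fin (p + q)) ℝ) :=
    {M | ∃ i j, M = indMat (Fin.castAdd q '' orbitOf G i) (Fin.natAdd p '' orbitOf H j)} with hs3def
  set s4 : Set (Matrix (Fin (p + q)) (Fin (p + q)) ℝ) :=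
    {M | ∃ i j, M = indMat (Fin.natAdd p '' orbitOf H j) (Fin.castAdd q '' orbitOf G i)} with hs4def
  -- image descriptions
  have hs1im : s1 = (dsUL p q) '' bG := by
    ext M
    constructor
    · rintro ⟨A, hA, rfl⟩; exact ⟨A, hA, (dsUL_apply A).symm ▸ rfl⟩
    · rintro ⟨A, hA, rfl⟩; exact ⟨A, hA, (dsUL_apply A).symm⟩
  have hs2im : s2 = (dsLR p q) '' bH := by
    ext M
    constructor
    · rintro ⟨B, hB, rfl⟩; exact ⟨B, hB, (dsLR_apply B).symm ▸ rfl⟩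
    · rintro ⟨B, hB, rfl⟩; exact ⟨B, hB, (dsLR_apply B).symm⟩
  -- support properties
  have hsupp1 : s1 ⊆ (dsSupp (fun a b : Fin (p + q) => (a : ℕ) < p ∧ (b : ℕ) < p) : Set _) := by
    rintro M ⟨A, hA, rfl⟩ a b hab
    rcases hx : finSumFinEquiv.symm a with x | x <;> rcases hy : finSumFinEquiv.symm b with y | y
    · exact absurd ⟨ds_val_lt_of_symm_inl hx, ds_val_lt_of_symm_inl hy⟩ hab
    all_goals rw [ds_oplus_eq, dsREq_apply, hx, hy]; simp
  have hsupp2 : s2 ⊆ (dsSupp (fun a b : Fin (p + q) => p ≤ (a : ℕ) ∧ p ≤ (b : ℕ)) : Set _) := by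
    rintro M ⟨B, hB, rfl⟩ a b hab
    rcases hx : finSumFinEquiv.symm a with x | x <;> rcases hy : finSumFinEquiv.symm b with y | y
    case inr.inr => exact absurd ⟨ds_val_ge_of_symm_inr hx, ds_val_ge_of_symm_inr hy⟩ hab
    all_goals rw [ds_oplus_eq, dsREq_apply, hx, hy]; simp
  have hsupp3 : s3 ⊆ (dsSupp (fun a b : Fin (p + q) => (a : ℕ) < p ∧ p ≤ (b : ℕ)) : Set _) := by
    rintro M ⟨i, j, rfl⟩ a b hab
    simp only [indMat, Matrix.of_apply]
    rw [if_neg]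
    rintro ⟨⟨z, -, rfl⟩, ⟨w, -, rfl⟩⟩
    exact hab ⟨by simpa using z.isLt, by simp⟩
  have hsupp4 : s4 ⊆ (dsSupp (fun a b : Fin (p + q) => p ≤ (a : ℕ) ∧ (b : ℕ) < p) : Set _) := by
    rintro M ⟨i, j, rfl⟩ a b hab
    simp only [indMat, Matrix.of_apply]
    rw [if_neg]
    rintro ⟨⟨z, -, rfl⟩, ⟨w, -, rfl⟩⟩
    exact hab ⟨by simp, by simpa using w.isLt⟩
  constructor
  · -- linear independence
    have li1 : LinearIndependent ℝ (fun x : s1 => (x : Matrix (Fin (p + q)) (Fin (p + q)) ℝ)) := by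
      rw [hs1im]
      exact LinearIndepOn.id_image (v := dsUL p q) (s := bG) (liG.map' (dsUL p q) (LinearMap.ker_eq_bot.mpr dsUL_injective))
    have li2 : LinearIndependent ℝ (fun x : s2 => (x : Matrix (Fin (p + q)) (Fin (p + q)) ℝ)) := by
      rw [hs2im]
      exact LinearIndepOn.id_image (v := dsLR p q) (s := bH) (liH.map' (dsLR p q) (LinearMap.ker_eq_bot.mpr dsLR_injective))
    have li3 : LinearIndependent ℝ (fun x : s3 => (x : Matrix (Fin (p + q)) (Fin (p + q)) ℝ)) := by
      apply ds_li_of_disjoint_support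
      · rintro M ⟨i, j, rfl⟩ h0
        have h1 : (indMat (Fin.castAdd q '' orbitOf G i) (Fin.natAdd p '' orbitOf H j) :
            Matrix (Fin (p+q)) (Fin (p+q)) ℝ) (Fin.castAdd q i) (Fin.natAdd p j) = 1 :=
          if_pos ⟨⟨i, ds_mem_orbit_self G i, rfl⟩, ⟨j, ds_mem_orbit_self H j, rfl⟩⟩
        rw [h0] at h1
        simpa using h1
      · rintro M ⟨i, j, rfl⟩ N ⟨i', j', rfl⟩ hMN a b
        by_contra hc
        push_neg at hc
        obtain ⟨h1, h2⟩ := hc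
        have hM1 : a ∈ Fin.castAdd q '' orbitOf G i ∧ b ∈ Fin.natAdd p '' orbitOf H j := by
          by_contra hcc
          exact h1 (if_neg hcc)
        have hM2 : a ∈ Fin.castAdd q '' orbitOf G i' ∧ b ∈ Fin.natAdd p '' orbitOf H j' := by
          by_contra hcc
          exact h2 (if_neg hcc)
        obtain ⟨⟨z, hz, rfl⟩, ⟨w, hw, hweq⟩⟩ := hM1
        obtain ⟨⟨z', hz', hzeq'⟩, ⟨w', hw', hweq'⟩⟩ := hM2
        have hzz : z' = z := Fin.castAdd_injective _ _ hzeq'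
        have hww : w' = w := ds_natAdd_injective _ _ (hweq'.trans hweq.symm)
        subst hzz hww
        have hOG : orbitOf G i = orbitOf G i' :=
          (ds_orbit_eq_of_mem hz).symm.trans (ds_orbit_eq_of_mem hz')
        have hOH : orbitOf H j = orbitOf H j' :=
          (ds_orbit_eq_of_mem hw).symm.trans (ds_orbit_eq_of_mem hw')
        exact hMN (by rw [hOG, hOH])
    have li4 : LinearIndependent ℝ (fun x : s4 => (x : Matrix (Fin (p + q)) (Fin (p + q)) ℝ)) := by
      apply ds_li_of_disjoint_support
      · rintro M ⟨i, j, rfl⟩ h0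
        have h1 : (indMat (Fin.natAdd p '' orbitOf H j) (Fin.castAdd q '' orbitOf G i) :
            Matrix (Fin (p+q)) (Fin (p+q)) ℝ) (Fin.natAdd p j) (Fin.castAdd q i) = 1 :=
          if_pos ⟨⟨j, ds_mem_orbit_self H j, rfl⟩, ⟨i, ds_mem_orbit_self G i, rfl⟩⟩
        rw [h0] at h1
        simpa using h1
      · rintro M ⟨i, j, rfl⟩ N ⟨i', j', rfl⟩ hMN a b
        by_contra hc
        push_neg at hc
        obtain ⟨h1, h2⟩ := hc
        have hM1 : a ∈ Fin.natAdd p '' orbitOf H j ∧ b ∈ Fin.castAdd q '' orbitOf G i := by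
          by_contra hcc
          exact h1 (if_neg hcc)
        have hM2 : a ∈ Fin.natAdd p '' orbitOf H j' ∧ b ∈ Fin.castAdd q '' orbitOf G i' := by
          by_contra hcc
          exact h2 (if_neg hcc)
        obtain ⟨⟨w, hw, hweq⟩, ⟨z, hz, rfl⟩⟩ := hM1
        obtain ⟨⟨w', hw', hweq'⟩, ⟨z', hz', hzeq'⟩⟩ := hM2
        have hzz : z' = z := Fin.castAdd_injective _ _ hzeq'
        have hww : w' = w := ds_natAdd_injective _ _ (hweq'.trans hweq.symm)
        subst hzz hww
        have hOG : orbitOf G i = orbitOf G i' :=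
          (ds_orbit_eq_of_mem hz).symm.trans (ds_orbit_eq_of_mem hz')
        have hOH : orbitOf H j = orbitOf H j' :=
          (ds_orbit_eq_of_mem hw).symm.trans (ds_orbit_eq_of_mem hw')
        exact hMN (by rw [hOG, hOH])
    have d12 : Disjoint (Submodule.span ℝ s1) (Submodule.span ℝ s2) := by
      refine Disjoint.mono (Submodule.span_le.mpr hsupp1) (Submodule.span_le.mpr hsupp2) ?_
      exact dsSupp_disjoint (by intro a b; omega)
    have li12 := LinearIndepOn.id_union (s := s1) (t := s2) li1 li2 d12
    have hspan12 : Submodule.span ℝ (s1 ∪ s2) ≤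
        dsSupp (fun a b : Fin (p + q) => ((a : ℕ) < p ∧ (b : ℕ) < p) ∨ (p ≤ (a : ℕ) ∧ p ≤ (b : ℕ))) := by
      rw [Submodule.span_union]
      refine sup_le ((Submodule.span_le.mpr hsupp1).trans (dsSupp_mono ?_))
        ((Submodule.span_le.mpr hsupp2).trans (dsSupp_mono ?_)) <;> intro a b <;> omega
    have d123 : Disjoint (Submodule.span ℝ (s1 ∪ s2)) (Submodule.span ℝ s3) := by
      refine Disjoint.mono hspan12 (Submodule.span_le.mpr hsupp3) ?_
      exact dsSupp_disjoint (by intro a b; omega)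
    have li123 := LinearIndepOn.id_union (s := s1 ∪ s2) (t := s3) li12 li3 d123
    have hspan123 : Submodule.span ℝ (s1 ∪ s2 ∪ s3) ≤
        dsSupp (fun a b : Fin (p + q) => ¬ (p ≤ (a : ℕ) ∧ (b : ℕ) < p)) := by
      rw [Submodule.span_union, Submodule.span_union]
      refine sup_le (sup_le ((Submodule.span_le.mpr hsupp1).trans (dsSupp_mono ?_))
        ((Submodule.span_le.mpr hsupp2).trans (dsSupp_mono ?_)))
        ((Submodule.span_le.mpr hsupp3).trans (dsSupp_mono ?_)) <;> intro a b <;> omega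
    have d1234 : Disjoint (Submodule.span ℝ (s1 ∪ s2 ∪ s3)) (Submodule.span ℝ s4) := by
      refine Disjoint.mono hspan123 (Submodule.span_le.mpr hsupp4) ?_
      exact dsSupp_disjoint (by intro a b; omega)
    exact LinearIndepOn.id_union (s := s1 ∪ s2 ∪ s3) (t := s4) li123 li4 d1234
  · -- span
    apply le_antisymm
    · rw [Submodule.span_le]
      rintro M (((hM | hM) | ⟨i, j, rfl⟩) | ⟨i, j, rfl⟩)
      · obtain ⟨A, hA, rfl⟩ := hM
        rintro Q ⟨g, hg, h, hh, rfl⟩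
        have hAc : A ∈ commutant {Q | ∃ g ∈ G, Q = permMat g} := by
          rw [← spanG]; exact Submodule.subset_span hA
        rw [ds_oplus_eq A 0]
        exact ds_comm_blocks A 0 0 0 g h (hAc (permMat g) ⟨g, hg, rfl⟩) (by simp) (by simp) (by simp)
      · obtain ⟨B, hB, rfl⟩ := hM
        rintro Q ⟨g, hg, h, hh, rfl⟩
        have hBc : B ∈ commutant {Q | ∃ h ∈ H, Q = permMat h} := by
          rw [← spanH]; exact Submodule.subset_span hB
        rw [ds_oplus_eq 0 B]
        exact ds_comm_blocks 0 0 0 B g h (by simp) (hBc (permMat h) ⟨h, hh, rfl⟩) (by simp) (by simp)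
      · rintro Q ⟨g, hg, h, hh, rfl⟩
        rw [ds_indMat_UR]
        exact ds_comm_blocks 0 (indMat (orbitOf G i) (orbitOf H j)) 0 0 g h (by simp) (by simp)
          ((ds_permMat_indMat_comm G H hg hh i j).symm) (by simp)
      · rintro Q ⟨g, hg, h, hh, rfl⟩
        rw [ds_indMat_LL]
        exact ds_comm_blocks 0 0 (indMat (orbitOf H j) (orbitOf G i)) 0 g h (by simp) (by simp)
          (by simp) ((ds_permMat_indMat_comm H G hh hg j i).symm)
    · intro M hM
      set N := (dsREq p q).symm M with hN
      set A := N.toBlocks₁₁ with hA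
      set C := N.toBlocks₁₂ with hC
      set D := N.toBlocks₂₁ with hD
      set B := N.toBlocks₂₂ with hB
      have hMN : M = dsREq p q (Matrix.fromBlocks A C D B) := by
        rw [hA, hC, hD, hB, Matrix.fromBlocks_toBlocks, hN, LinearEquiv.apply_symm_apply]
      have hblocks : ∀ g ∈ G, ∀ h ∈ H,
          A * permMat g = permMat g * A ∧ C * permMat h = permMat g * C ∧
          D * permMat g = permMat h * D ∧ B * permMat h = permMat h * B := by
        intro g hg h hh
        have hcomm := hM (oplus (permMat g) (permMat h)) ⟨g, hg, h, hh, rfl⟩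
        rw [hMN, ds_oplus_eq, dsREq_mul, dsREq_mul] at hcomm
        have h2 := (dsREq p q).injective hcomm
        rw [Matrix.fromBlocks_multiply, Matrix.fromBlocks_multiply] at h2
        obtain ⟨e1, e2, e3, e4⟩ := Matrix.fromBlocks_inj.mp h2
        exact ⟨by simpa using e1, by simpa using e2, by simpa using e3, by simpa using e4⟩
      -- decompose M
      have hdec : M = dsUL p q A + dsUR p q C + dsLL p q D + dsLR p q B := by
        rw [hMN]
        show _ = dsREq p q (Matrix.fromBlocks A 0 0 0) + dsREq p q (Matrix.fromBlocks 0 C 0 0) + dsREq p q (Matrix.fromBlocks 0 0 D 0) + dsREq p q (Matrix.fromBlocks 0 0 0 B)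
        rw [← map_add, ← map_add, ← map_add]
        congr 1
        ext (i | i) (j | j) <;> simp
      have hsub1 : s1 ⊆ s1 ∪ s2 ∪ s3 ∪ s4 := by intro x hx; exact Or.inl (Or.inl (Or.inl hx))
      have hsub2 : s2 ⊆ s1 ∪ s2 ∪ s3 ∪ s4 := by intro x hx; exact Or.inl (Or.inl (Or.inr hx))
      have hsub3 : s3 ⊆ s1 ∪ s2 ∪ s3 ∪ s4 := by intro x hx; exact Or.inl (Or.inr hx)
      have hsub4 : s4 ⊆ s1 ∪ s2 ∪ s3 ∪ s4 := by intro x hx; exact Or.inr hx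
      have m1 : dsUL p q A ∈ Submodule.span ℝ (s1 ∪ s2 ∪ s3 ∪ s4) := by
        have hAc : A ∈ Submodule.span ℝ bG := by
          rw [spanG]
          intro Q hQ
          obtain ⟨g, hg, rfl⟩ := hQ
          exact (hblocks g hg 1 H.one_mem).1
        have : dsUL p q A ∈ Submodule.map (dsUL p q) (Submodule.span ℝ bG) :=
          Submodule.mem_map_of_mem hAc
        rw [Submodule.map_span] at this
        exact Submodule.span_mono (hs1im ▸ hsub1) this
      have m2 : dsLR p q B ∈ Submodule.span ℝ (s1 ∪ s2 ∪ s3 ∪ s4) := by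
        have hBc : B ∈ Submodule.span ℝ bH := by
          rw [spanH]
          intro Q hQ
          obtain ⟨h, hh, rfl⟩ := hQ
          exact (hblocks 1 G.one_mem h hh).2.2.2
        have : dsLR p q B ∈ Submodule.map (dsLR p q) (Submodule.span ℝ bH) :=
          Submodule.mem_map_of_mem hBc
        rw [Submodule.map_span] at this
        exact Submodule.span_mono (hs2im ▸ hsub2) this
      have m3 : dsUR p q C ∈ Submodule.span ℝ (s1 ∪ s2 ∪ s3 ∪ s4) := by
        have hrow : ∀ g ∈ G, ∀ a b, C (g a) b = C a b := by
          intro g hg a b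
          have h1 := (hblocks g hg 1 H.one_mem).2.1
          rw [ds_permMat_one, Matrix.mul_one, ds_permMat_mul] at h1
          have := congrFun (congrFun h1 (g a)) b
          simpa using this
        have hcol : ∀ h ∈ H, ∀ a b, C a (h b) = C a b := by
          intro h hh a b
          have h1 := (hblocks 1 G.one_mem h hh).2.1
          rw [ds_permMat_one, Matrix.one_mul, ds_mul_permMat] at h1
          exact congrFun (congrFun h1 a) b
        rw [ds_orbit_decomp G H C hrow hcol, map_sum]
        apply Submodule.sum_mem
        intro i _
        rw [map_sum]
        apply Submodule.sum_mem
        intro j _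
        rw [LinearMap.map_smul]
        apply Submodule.smul_mem
        apply Submodule.subset_span
        apply hsub3
        exact ⟨i, j, (ds_indMat_UR (orbitOf G i) (orbitOf H j)).symm⟩
      have m4 : dsLL p q D ∈ Submodule.span ℝ (s1 ∪ s2 ∪ s3 ∪ s4) := by
        have hrow : ∀ h ∈ H, ∀ a b, D (h a) b = D a b := by
          intro h hh a b
          have h1 := (hblocks 1 G.one_mem h hh).2.2.1
          rw [ds_permMat_one, Matrix.mul_one, ds_permMat_mul] at h1
          have := congrFun (congrFun h1 (h a)) b
          simpa using this
        have hcol : ∀ g ∈ G, ∀ a b, D a (g b) = D a b := by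
          intro g hg a b
          have h1 := (hblocks g hg 1 H.one_mem).2.2.1
          rw [ds_permMat_one, Matrix.one_mul, ds_mul_permMat] at h1
          exact congrFun (congrFun h1 a) b
        rw [ds_orbit_decomp H G D hrow hcol, map_sum]
        apply Submodule.sum_mem
        intro j _
        rw [map_sum]
        apply Submodule.sum_mem
        intro i _
        rw [LinearMap.map_smul]
        apply Submodule.smul_mem
        apply Submodule.subset_span
        apply hsub4
        exact ⟨i, j, (ds_indMat_LL (orbitOf H j) (orbitOf G i)).symm⟩
      rw [hdec]
      exact add_mem (add_mem (add_mem m1 m3) m4) m2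
end
end

section
/- Let G be a finite subgroup of the symmetric group on Fin p and H a finite subgroup of the symmetric group on Fin q. For g ∈ G and h⃗ ∈ H^p, let wr(h⃗, g) be the pq×pq matrix whose entry at row (i-1)q + j and column (i′-1)q + j′ equals 1 if (P_g)_{i,i′} = 1 and (P_{h_i})_{j,j′} = 1, and 0 otherwise, and let E(H≀G) = {M ∈ ℝ^{pq×pq} : M · wr(h⃗, g) = wr(h⃗, g) · M for all g ∈ G, h⃗ ∈ H^p}. Then dim E(H≀G) = |O(G)| · dim E(H) + (dim E(G) − |O(G)|) · |O(H)|², where |O(G)|, |O(H)| are the numbers of orbits of G on Fin p and of H on Fin q, and E(G), E(H) are the commutants of {P_g : g ∈ G} and {P_h : h ∈ H}. -/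
open Matrix
open scoped Kronecker
open scoped Classical

noncomputable section

def pMat {Z : Type*} [DecidableEq Z] (σ : Equiv.Perm Z) : Matrix Z Z ℝ :=
  Matrix.of fun i j => if i = σ j then (1 : ℝ) else 0

variable {Z : Type*} [Fintype Z] [DecidableEq Z]

lemma mul_pMat (M : Matrix Z Z ℝ) (σ : Equiv.Perm Z) (i j : Z) :
    (M * pMat σ) i j = M i (σ j) := by
  simp [Matrix.mul_apply, pMat, mul_ite]

lemma pMat_mul (M : Matrix Z Z ℝ) (σ : Equiv.Perm Z) (i j : Z) :
    (pMat σ * M) i j = M (σ⁻¹ i) j := by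
  simp only [Matrix.mul_apply, pMat, Matrix.of_apply, ite_mul, one_mul, zero_mul]
  rw [Finset.sum_eq_single (σ⁻¹ i)]
  · simp
  · intro b _ hb
    rw [if_neg]
    intro h; exact hb (by simp [h])
  · simp

-- test smul
example (Γ : Subgroup (Equiv.Perm Z)) (γ : Γ) (z : Z) : γ • z = (γ : Equiv.Perm Z) z := rfl
example (Γ : Subgroup (Equiv.Perm Z)) (γ : Γ) (z : Z × Z) : γ • z = ((γ : Equiv.Perm Z) z.1, (γ : Equiv.Perm Z) z.2) := rfl

lemma mem_commutant_iff (Γ : Subgroup (Equiv.Perm Z)) (M : Matrix Z Z ℝ) :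
    M ∈ commutant {Q | ∃ σ ∈ Γ, Q = pMat σ} ↔
      ∀ σ ∈ Γ, ∀ i j, M (σ i) (σ j) = M i j := by
  constructor
  · intro hM σ hσ i j
    have h := hM (pMat σ) ⟨σ, hσ, rfl⟩
    have := congrFun (congrFun h (σ i)) j
    rw [mul_pMat, pMat_mul] at this
    simpa using this
  · intro hM Q hQ
    obtain ⟨σ, hσ, rfl⟩ := hQ
    ext i j
    rw [mul_pMat, pMat_mul]
    have := hM σ hσ (σ⁻¹ i) j
    simpa using this

variable (Γ : Subgroup (Equiv.Perm Z))

abbrev pairQuot := Quotient (MulAction.orbitRel Γ (Z × Z))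

def toMatMap : ((pairQuot Γ) → ℝ) →ₗ[ℝ] Matrix Z Z ℝ where
  toFun f := Matrix.of fun i j => f ⟦(i, j)⟧
  map_add' f g := rfl
  map_smul' c f := rfl

lemma toMatMap_inj : Function.Injective (toMatMap Γ) := by
  intro f g h
  funext c
  obtain ⟨z, rfl⟩ := Quotient.exists_rep c
  exact congrFun (congrFun (congrArg Matrix.of.symm h) z.1) z.2

lemma quot_smul (γ : Γ) (z : Z × Z) :
    (⟦γ • z⟧ : pairQuot Γ) = ⟦z⟧ :=
  Quotient.sound (MulAction.mem_orbit z γ)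

lemma toMatMap_range :
    LinearMap.range (toMatMap Γ) = commutant {Q | ∃ σ ∈ Γ, Q = pMat σ} := by
  apply le_antisymm
  · rintro M ⟨f, rfl⟩
    rw [mem_commutant_iff]
    intro σ hσ i j
    show f ⟦(σ i, σ j)⟧ = f ⟦(i, j)⟧
    congr 1
    exact quot_smul Γ ⟨σ, hσ⟩ (i, j)
  · intro M hM
    rw [mem_commutant_iff] at hM
    refine ⟨Quotient.lift (fun z : Z × Z => M z.1 z.2) ?_, ?_⟩
    · intro a b hab
      obtain ⟨γ, hγ⟩ := hab
      have h2 := hM γ γ.2 b.1 b.2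
      have ha : a = ((γ : Equiv.Perm Z) b.1, (γ : Equiv.Perm Z) b.2) := hγ.symm
      show M a.1 a.2 = M b.1 b.2
      rw [ha]; exact h2
    · ext i j
      rfl

lemma finrank_commutant :
    Module.finrank ℝ (commutant {Q | ∃ σ ∈ Γ, Q = pMat σ}) =
      Nat.card (pairQuot Γ) := by
  rw [← toMatMap_range, LinearMap.finrank_range_of_inj (toMatMap_inj Γ)]
  rw [Module.finrank_pi, Nat.card_eq_fintype_card]

lemma orbit_eq_orbitSet (i : Z) :
    MulAction.orbit Γ i = {j | ∃ g ∈ Γ, g i = j} := by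
  ext j
  constructor
  · rintro ⟨γ, rfl⟩; exact ⟨γ, γ.2, rfl⟩
  · rintro ⟨g, hg, rfl⟩; exact ⟨⟨g, hg⟩, rfl⟩

def orbitLift : Quotient (MulAction.orbitRel Γ Z) → Set Z :=
  Quotient.lift (MulAction.orbit Γ) (fun _ _ h => MulAction.orbit_eq_iff.mpr h)

lemma orbitLift_inj : Function.Injective (orbitLift Γ) := by
  intro c d h
  obtain ⟨a, rfl⟩ := Quotient.exists_rep c
  obtain ⟨b, rfl⟩ := Quotient.exists_rep d
  exact Quotient.sound (MulAction.orbit_eq_iff.mp h)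

lemma ncard_orbitSet :
    {O : Set Z | ∃ i, O = {j | ∃ g ∈ Γ, g i = j}}.ncard =
      Nat.card (Quotient (MulAction.orbitRel Γ Z)) := by
  have key : {O : Set Z | ∃ i, O = {j | ∃ g ∈ Γ, g i = j}} =
      Set.range (orbitLift Γ) := by
    ext O
    constructor
    · rintro ⟨i, rfl⟩
      exact ⟨⟦i⟧, (orbit_eq_orbitSet Γ i)⟩
    · rintro ⟨c, rfl⟩
      obtain ⟨a, rfl⟩ := Quotient.exists_rep c
      exact ⟨a, orbit_eq_orbitSet Γ a⟩
  rw [key, ← Nat.card_coe_set_eq, Nat.card_range_of_injective (orbitLift_inj Γ)]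

def isDiag : pairQuot Γ → Prop :=
  Quotient.lift (fun z : Z × Z => z.1 = z.2) (by
    rintro a b ⟨γ, hγ⟩
    have : ((γ : Equiv.Perm Z) b.1, (γ : Equiv.Perm Z) b.2) = a := hγ
    simp only [eq_iff_iff]
    constructor
    · intro h
      have h1 : (γ : Equiv.Perm Z) b.1 = a.1 := by rw [← this]
      have h2 : (γ : Equiv.Perm Z) b.2 = a.2 := by rw [← this]
      rw [← h1, ← h2] at h
      exact (γ : Equiv.Perm Z).injective h
    · intro h
      rw [← this]; simp [h])

lemma isDiag_mk (z : Z × Z) : isDiag Γ (⟦z⟧ : pairQuot Γ) ↔ z.1 = z.2 := Iff.rfl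

def diagEquiv : Quotient (MulAction.orbitRel Γ Z) ≃ {c : pairQuot Γ // isDiag Γ c} := by
  apply Equiv.ofBijective
    (Quotient.lift (fun i : Z => (⟨⟦(i, i)⟧, rfl⟩ : {c : pairQuot Γ // isDiag Γ c}))
      (by rintro a b ⟨γ, rfl⟩
          apply Subtype.ext
          exact quot_smul Γ γ (b, b)))
  constructor
  · intro c d h
    obtain ⟨a, rfl⟩ := Quotient.exists_rep c
    obtain ⟨b, rfl⟩ := Quotient.exists_rep d
    have : (⟦(a,a)⟧ : pairQuot Γ) = ⟦(b,b)⟧ := congrArg Subtype.val h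
    obtain ⟨γ, hγ⟩ := Quotient.exact this
    have h1 : (γ : Equiv.Perm Z) b = a := congrArg Prod.fst hγ
    exact Quotient.sound ⟨γ, h1⟩
  · rintro ⟨c, hc⟩
    obtain ⟨z, rfl⟩ := Quotient.exists_rep c
    rw [isDiag_mk] at hc
    refine ⟨⟦z.1⟧, Subtype.ext ?_⟩
    show (⟦(z.1, z.1)⟧ : pairQuot Γ) = ⟦z⟧
    congr 1
    exact Prod.ext rfl hc

lemma card_pairQuot_split :
    Nat.card (pairQuot Γ) =
      Nat.card (Quotient (MulAction.orbitRel Γ Z)) +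
        Nat.card {c : pairQuot Γ // ¬ isDiag Γ c} := by
  rw [Nat.card_congr (diagEquiv Γ)]
  rw [← Nat.card_sum]
  exact (Nat.card_congr (Equiv.sumCompl (isDiag Γ))).symm

section Wreath

variable {X Y : Type*} [Fintype X] [DecidableEq X] [Fintype Y] [DecidableEq Y]

def wrPerm (h : X → Equiv.Perm Y) (g : Equiv.Perm X) : Equiv.Perm (X × Y) where
  toFun z := (g z.1, h (g z.1) z.2)
  invFun z := (g⁻¹ z.1, (h z.1)⁻¹ z.2)
  left_inv z := by simp
  right_inv z := by simp

@[simp] lemma wrPerm_apply (h : X → Equiv.Perm Y) (g : Equiv.Perm X) (z : X × Y) :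
    wrPerm h g z = (g z.1, h (g z.1) z.2) := rfl

def wreath (G : Subgroup (Equiv.Perm X)) (H : Subgroup (Equiv.Perm Y)) :
    Subgroup (Equiv.Perm (X × Y)) where
  carrier := {σ | ∃ g ∈ G, ∃ h : X → Equiv.Perm Y, (∀ i, h i ∈ H) ∧ σ = wrPerm h g}
  one_mem' := ⟨1, one_mem G, fun _ => 1, fun _ => one_mem H, by ext z <;> simp⟩
  mul_mem' := by
    rintro σ τ ⟨g, hg, h, hh, rfl⟩ ⟨g', hg', h', hh', rfl⟩
    refine ⟨g * g', mul_mem hg hg', fun k => h k * h' (g⁻¹ k),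
      fun k => mul_mem (hh k) (hh' _), ?_⟩
    ext z <;> simp [Equiv.Perm.mul_apply]
  inv_mem' := by
    rintro σ ⟨g, hg, h, hh, rfl⟩
    refine ⟨g⁻¹, inv_mem hg, fun k => (h (g k))⁻¹, fun k => inv_mem (hh _), ?_⟩
    rw [inv_eq_iff_mul_eq_one]
    ext z <;> simp [Equiv.Perm.mul_apply]

lemma wreath_mem_iff (G : Subgroup (Equiv.Perm X)) (H : Subgroup (Equiv.Perm Y))
    (σ : Equiv.Perm (X × Y)) :
    σ ∈ wreath G H ↔ ∃ g ∈ G, ∃ h : X → Equiv.Perm Y, (∀ i, h i ∈ H) ∧ σ = wrPerm h g :=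
  Iff.rfl

end Wreath

section Count

variable {X Y : Type*} [Fintype X] [DecidableEq X] [Fintype Y] [DecidableEq Y]
variable (G : Subgroup (Equiv.Perm X)) (H : Subgroup (Equiv.Perm Y))

abbrev TInv := (Quotient (MulAction.orbitRel G X) × pairQuot H) ⊕
  ({c : pairQuot G // ¬ isDiag G c} ×
    Quotient (MulAction.orbitRel H Y) × Quotient (MulAction.orbitRel H Y))

def wf (z : (X × Y) × (X × Y)) : TInv G H :=
  if hd : z.1.1 = z.2.1 then Sum.inl (⟦z.1.1⟧, ⟦(z.1.2, z.2.2)⟧)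
  else Sum.inr (⟨⟦(z.1.1, z.2.1)⟧, fun h => hd ((isDiag_mk G _).mp h)⟩,
    ⟦z.1.2⟧, ⟦z.2.2⟧)

lemma wf_smul (w : ↥(wreath G H)) (z : (X × Y) × (X × Y)) :
    wf G H (w • z) = wf G H z := by
  obtain ⟨g, hg, h, hh, hw⟩ := w.2
  have hz : w • z = (((w : Equiv.Perm (X × Y)) z.1), ((w : Equiv.Perm (X × Y)) z.2)) := rfl
  rw [hz, hw]
  by_cases hd : z.1.1 = z.2.1
  · have hd' : (wrPerm h g z.1).1 = (wrPerm h g z.2).1 := by simp [hd]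
    rw [wf, wf, dif_pos hd, dif_pos hd']
    congr 1
    refine Prod.ext ?_ ?_
    · show (⟦g z.1.1⟧ : Quotient (MulAction.orbitRel G X)) = ⟦z.1.1⟧
      exact Quotient.sound (MulAction.mem_orbit z.1.1 (⟨g, hg⟩ : G))
    · show (⟦(h (g z.1.1) z.1.2, h (g z.2.1) z.2.2)⟧ : pairQuot H) = ⟦(z.1.2, z.2.2)⟧
      rw [hd]
      exact quot_smul H (⟨h (g z.2.1), hh _⟩ : H) (z.1.2, z.2.2)
  · have hd' : ¬ (wrPerm h g z.1).1 = (wrPerm h g z.2).1 := by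
      simp only [wrPerm_apply]
      exact fun hc => hd (g.injective hc)
    rw [wf, wf, dif_neg hd, dif_neg hd']
    congr 1
    refine Prod.ext (Subtype.ext ?_) (Prod.ext ?_ ?_)
    · show (⟦(g z.1.1, g z.2.1)⟧ : pairQuot G) = ⟦(z.1.1, z.2.1)⟧
      exact quot_smul G (⟨g, hg⟩ : G) (z.1.1, z.2.1)
    · show (⟦h (g z.1.1) z.1.2⟧ : Quotient (MulAction.orbitRel H Y)) = ⟦z.1.2⟧
      exact Quotient.sound (MulAction.mem_orbit z.1.2 (⟨h (g z.1.1), hh _⟩ : H))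
    · show (⟦h (g z.2.1) z.2.2⟧ : Quotient (MulAction.orbitRel H Y)) = ⟦z.2.2⟧
      exact Quotient.sound (MulAction.mem_orbit z.2.2 (⟨h (g z.2.1), hh _⟩ : H))

def wF : pairQuot (wreath G H) → TInv G H :=
  Quotient.lift (wf G H) (by
    rintro a b ⟨w, hw⟩
    rw [← show w • b = a from hw, wf_smul])

lemma wF_bij : Function.Bijective (wF G H) := by
  constructor
  · intro c d hcd
    obtain ⟨z, rfl⟩ := Quotient.exists_rep c
    obtain ⟨z', rfl⟩ := Quotient.exists_rep d
    have h : wf G H z = wf G H z' := hcd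
    apply Quotient.sound
    by_cases h1 : z.1.1 = z.2.1 <;> by_cases h2 : z'.1.1 = z'.2.1
    · rw [wf, wf, dif_pos h1, dif_pos h2] at h
      obtain ⟨hA, hB⟩ := Prod.mk.injEq .. ▸ Sum.inl.inj h
      obtain ⟨γG, hγG⟩ := Quotient.exact hA
      obtain ⟨γH, hγH⟩ := Quotient.exact hB
      refine ⟨⟨wrPerm (fun _ => (γH : Equiv.Perm Y)) (γG : Equiv.Perm X),
        (γG : Equiv.Perm X), γG.2, _, fun _ => γH.2, rfl⟩, ?_⟩
      have e1 : (γG : Equiv.Perm X) z'.1.1 = z.1.1 := hγG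
      have e2 : (γH : Equiv.Perm Y) z'.1.2 = z.1.2 := congrArg Prod.fst hγH
      have e3 : (γH : Equiv.Perm Y) z'.2.2 = z.2.2 := congrArg Prod.snd hγH
      show (wrPerm (fun _ => (γH : Equiv.Perm Y)) (γG : Equiv.Perm X) z'.1,
        wrPerm (fun _ => (γH : Equiv.Perm Y)) (γG : Equiv.Perm X) z'.2) = z
      refine Prod.ext (Prod.ext ?_ ?_) (Prod.ext ?_ ?_) <;>
        simp only [wrPerm_apply]
      · exact e1
      · exact e2
      · rw [← h2, e1, h1]
      · exact e3
    · rw [wf, wf, dif_pos h1, dif_neg h2] at h; exact absurd h (by simp)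
    · rw [wf, wf, dif_neg h1, dif_pos h2] at h; exact absurd h (by simp)
    · rw [wf, wf, dif_neg h1, dif_neg h2] at h
      have h' := Sum.inr.inj h
      have hA : (⟦(z.1.1, z.2.1)⟧ : pairQuot G) = ⟦(z'.1.1, z'.2.1)⟧ :=
        congrArg (fun t => (Subtype.val t.1)) h'
      have hB : (⟦z.1.2⟧ : Quotient (MulAction.orbitRel H Y)) = ⟦z'.1.2⟧ :=
        congrArg (fun t => t.2.1) h'
      have hC : (⟦z.2.2⟧ : Quotient (MulAction.orbitRel H Y)) = ⟦z'.2.2⟧ :=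
        congrArg (fun t => t.2.2) h'
      obtain ⟨γG, hγG⟩ := Quotient.exact hA
      obtain ⟨γ1, hγ1⟩ := Quotient.exact hB
      obtain ⟨γ2, hγ2⟩ := Quotient.exact hC
      have e1 : (γG : Equiv.Perm X) z'.1.1 = z.1.1 := congrArg Prod.fst hγG
      have e2 : (γG : Equiv.Perm X) z'.2.1 = z.2.1 := congrArg Prod.snd hγG
      set hv : X → Equiv.Perm Y := fun t =>
        if t = z.1.1 then (γ1 : Equiv.Perm Y) else if t = z.2.1 then (γ2 : Equiv.Perm Y) else 1
        with hhv
      refine ⟨⟨wrPerm hv (γG : Equiv.Perm X), (γG : Equiv.Perm X), γG.2, hv,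
        fun t => ?_, rfl⟩, ?_⟩
      · rw [hhv]
        dsimp only
        split_ifs
        · exact γ1.2
        · exact γ2.2
        · exact one_mem H
      · show (wrPerm hv (γG : Equiv.Perm X) z'.1, wrPerm hv (γG : Equiv.Perm X) z'.2) = z
        refine Prod.ext (Prod.ext ?_ ?_) (Prod.ext ?_ ?_) <;>
          simp only [wrPerm_apply]
        · exact e1
        · rw [e1, hhv]
          simp only [if_pos rfl]
          exact hγ1
        · exact e2
        · rw [e2, hhv]
          dsimp only
          rw [if_neg (Ne.symm h1), if_pos rfl]
          exact hγ2
  · intro t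
    match t with
    | Sum.inl (c, d) =>
      obtain ⟨i, rfl⟩ := Quotient.exists_rep c
      obtain ⟨y, rfl⟩ := Quotient.exists_rep d
      refine ⟨⟦((i, y.1), (i, y.2))⟧, ?_⟩
      show wf G H ((i, y.1), (i, y.2)) = _
      rw [wf, dif_pos rfl]
    | Sum.inr (⟨c, hc⟩, d, d') =>
      obtain ⟨x, rfl⟩ := Quotient.exists_rep c
      obtain ⟨j, rfl⟩ := Quotient.exists_rep d
      obtain ⟨j', rfl⟩ := Quotient.exists_rep d'
      have hx : ¬ x.1 = x.2 := fun h => hc ((isDiag_mk G x).mpr h)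
      refine ⟨⟦((x.1, j), (x.2, j'))⟧, ?_⟩
      show wf G H ((x.1, j), (x.2, j')) = _
      rw [wf, dif_neg hx]

lemma card_pairQuot_wreath :
    Nat.card (pairQuot (wreath G H)) =
      Nat.card (Quotient (MulAction.orbitRel G X)) * Nat.card (pairQuot H) +
        Nat.card {c : pairQuot G // ¬ isDiag G c} *
          Nat.card (Quotient (MulAction.orbitRel H Y)) ^ 2 := by
  rw [Nat.card_congr (Equiv.ofBijective _ (wF_bij G H))]
  rw [Nat.card_sum, Nat.card_prod, Nat.card_prod, Nat.card_prod, sq]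

end Count



lemma wr_eq_pMat {p q : ℕ} (h : Fin p → Equiv.Perm (Fin q)) (g : Equiv.Perm (Fin p)) :
    wr h g = pMat (wrPerm h g) := by
  ext ⟨x1, x2⟩ ⟨y1, y2⟩
  show (if x1 = g y1 ∧ x2 = h x1 y2 then (1:ℝ) else 0) =
    (if (x1, x2) = (g y1, h (g y1) y2) then (1:ℝ) else 0)
  by_cases hi : x1 = g y1
  · subst hi
    simp [Prod.ext_iff]
  · rw [if_neg (fun hc => hi hc.1), if_neg (fun hc => hi (Prod.ext_iff.mp hc).1)]

/-- `dim E(H≀G) = |O(G)|·dim E(H) + (dim E(G) − |O(G)|)·|O(H)|²`. -/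
theorem wreath_commutant_dim {p q : ℕ}
    (G : Subgroup (Equiv.Perm (Fin p))) (H : Subgroup (Equiv.Perm (Fin q))) :
    (Module.finrank ℝ
        (commutant {Q | ∃ g ∈ G, ∃ h : Fin p → Equiv.Perm (Fin q),
          (∀ i, h i ∈ H) ∧ Q = wr h g}) : ℤ) =
      ({O : Set (Fin p) | ∃ i, O = orbitOf G i}.ncard : ℤ) *
          (Module.finrank ℝ (commutant {Q | ∃ h ∈ H, Q = permMat h}) : ℤ) +
        ((Module.finrank ℝ (commutant {Q | ∃ g ∈ G, Q = permMat g}) : ℤ) -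
            ({O : Set (Fin p) | ∃ i, O = orbitOf G i}.ncard : ℤ)) *
          ({O : Set (Fin q) | ∃ j, O = orbitOf H j}.ncard : ℤ) ^ 2 := by
  classical
  have hsetW : {Q | ∃ g ∈ G, ∃ h : Fin p → Equiv.Perm (Fin q),
      (∀ i, h i ∈ H) ∧ Q = wr h g} = {Q | ∃ σ ∈ wreath G H, Q = pMat σ} := by
    ext Q
    constructor
    · rintro ⟨g, hg, h, hh, rfl⟩
      exact ⟨wrPerm h g, ⟨g, hg, h, hh, rfl⟩, wr_eq_pMat h g⟩
    · rintro ⟨σ, hσ, rfl⟩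
      obtain ⟨g, hg, h, hh, rfl⟩ := hσ
      exact ⟨g, hg, h, hh, (wr_eq_pMat h g).symm⟩
  have hsetG : {Q | ∃ g ∈ G, Q = permMat g} = {Q | ∃ σ ∈ G, Q = pMat σ} := rfl
  have hsetH : {Q | ∃ h ∈ H, Q = permMat h} = {Q | ∃ σ ∈ H, Q = pMat σ} := rfl
  have horbG : {O : Set (Fin p) | ∃ i, O = orbitOf G i} =
      {O : Set (Fin p) | ∃ i, O = {j | ∃ g ∈ G, g i = j}} := rfl
  have horbH : {O : Set (Fin q) | ∃ j, O = orbitOf H j} =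
      {O : Set (Fin q) | ∃ i, O = {j | ∃ g ∈ H, g i = j}} := rfl
  rw [hsetW, hsetG, hsetH, horbG, horbH, ncard_orbitSet G, ncard_orbitSet H,
    finrank_commutant (wreath G H), finrank_commutant G, finrank_commutant H,
    card_pairQuot_wreath G H, card_pairQuot_split G]
  push_cast
  ring
end
end
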